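/- With T, H, A defined by the splitting recursion and ρ a spectral gap for α, if δ > 0 and ‖B k‖ ≤ δ for every k with 1 ≤ k ≤ r, then ‖H r‖ ≤ δ · P_{r−1}(δ/ρ), and consequently every formal exponent satisfies |λ j| ≤ δ(1 + P_{r−1}(δ/ρ)). -/

import Mathlib

/-!
By strong induction on `1 ≤ k ≤ r` one shows `‖H k‖ ≤ δ P_{k-1}(x)` with `x = δ / ρ`. Then
`‖B k - H k‖ ≤ δ (1 + P_{k-1}(x))`, which bounds the diagonal part `A k` by the same quantity and,
since every entry of `T k` is an entry of `B k - H k` divided by a gap `≥ ρ`, gives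
`‖T k‖ ≤ x (1 + P_{k-1}(x))`. For `k ≤ r` the shift term of `H k` vanishes, and submultiplicativity
bounds `T l * A (k - l) - B (k - l) * T l` by `δ x (1 + P_{l-1}(x)) (2 + P_{k-1-l}(x))`. The
recursion for `P_m` is exactly the expanded form of `∑_{l=1}^{m} x (1 + P_{l-1}) (2 + P_{m-l})`,
which closes the induction.
-/

attribute [local instance] Matrix.linftyOpNormedAddCommGroup

open Finset

namespace Matrix

variable {m n α : Type*} [Fintype m] [Fintype n] [NormedAddCommGroup α]

theorem sum_norm_row_le_linfty_opNorm (A : Matrix m n α) (i : m) :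
    ∑ j, ‖A i j‖ ≤ ‖A‖ := by
  simp only [← coe_nnnorm, ← NNReal.coe_sum, NNReal.coe_le_coe, linfty_opNNNorm_def]
  exact le_sup (f := fun i => ∑ j, ‖A i j‖₊) (mem_univ i)

theorem norm_entry_le_linfty_opNorm (A : Matrix m n α) (i : m) (j : n) : ‖A i j‖ ≤ ‖A‖ :=
  (single_le_sum (fun _ _ => norm_nonneg _) (mem_univ j)).trans
    (sum_norm_row_le_linfty_opNorm A i)

theorem linfty_opNorm_le_of_sum_norm_row_le {A : Matrix m n α} {c : ℝ} (hc : 0 ≤ c)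
    (h : ∀ i, ∑ j, ‖A i j‖ ≤ c) : ‖A‖ ≤ c := by
  lift c to NNReal using hc
  rw [linfty_opNorm_def, NNReal.coe_le_coe]
  refine Finset.sup_le fun i _ => ?_
  simpa only [← coe_nnnorm, ← NNReal.coe_sum, NNReal.coe_le_coe] using h i

theorem linfty_opNorm_le_mul_of_norm_entry_le {β : Type*} [NormedAddCommGroup β]
    {A : Matrix m n α} {M : Matrix m n β} {c : ℝ} (hc : 0 ≤ c)
    (h : ∀ i j, ‖A i j‖ ≤ c * ‖M i j‖) : ‖A‖ ≤ c * ‖M‖ :=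
  linfty_opNorm_le_of_sum_norm_row_le (by positivity) fun i =>
    calc ∑ j, ‖A i j‖ ≤ ∑ j, c * ‖M i j‖ := sum_le_sum fun j _ => h i j
      _ = c * ∑ j, ‖M i j‖ := (mul_sum ..).symm
      _ ≤ c * ‖M‖ := by gcongr; exact sum_norm_row_le_linfty_opNorm M i

theorem linfty_opNorm_diagonal_diag_le [DecidableEq m] (A : Matrix m m α) :
    ‖diagonal A.diag‖ ≤ ‖A‖ := by
  rw [linfty_opNorm_diagonal]
  exact (pi_norm_le_iff_of_nonneg (norm_nonneg A)).mpr fun i =>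
    norm_entry_le_linfty_opNorm A i i

end Matrix

theorem norm_sub_le_mul_one_add {E : Type*} [SeminormedAddCommGroup E] {b h : E} {δ c : ℝ}
    (hb : ‖b‖ ≤ δ) (hh : ‖h‖ ≤ δ * c) : ‖b - h‖ ≤ δ * (1 + c) := by
  linarith [norm_sub_le b h]

theorem sum_Ico_splitting_eq {x : ℝ} {q : ℕ → ℝ} (hq0 : q 0 = 0) (m : ℕ) :
    ∑ l ∈ Ico 1 (m + 1), x * (1 + q (l - 1)) * (2 + q (m - l)) =
      2 * m * x + ∑ l ∈ Icc 2 m, 3 * x * q (l - 1)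
        + ∑ l ∈ Icc 2 (m - 1), x * q (l - 1) * q (m - l) := by
  set I := Ico 1 (m + 1)
  have hconst : ∑ _l ∈ I, 2 * x = 2 * m * x := by simp [I]; ring
  have hreflect : ∑ l ∈ I, x * q (m - l) = ∑ l ∈ I, x * q (l - 1) :=
    sum_nbij' (fun l => m + 1 - l) (fun l => m + 1 - l) (by simp [I]; omega) (by simp [I]; omega)
      (by simp [I]; omega) (by simp [I]; omega) fun l hl => by
        simp only [I, mem_Ico] at hl; congr 2; omega
  have hlinear : ∑ l ∈ Icc 2 m, 3 * x * q (l - 1) = ∑ l ∈ I, 3 * x * q (l - 1) :=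
    sum_subset (by intro l; simp [I]; omega) fun l hl hl' => by
      obtain rfl : l = 1 := by simp [I] at hl hl'; omega
      simp [hq0]
  have hquadratic : ∑ l ∈ Icc 2 (m - 1), x * q (l - 1) * q (m - l)
      = ∑ l ∈ I, x * q (l - 1) * q (m - l) :=
    sum_subset (by intro l; simp [I]; omega) fun l hl hl' => by
      obtain rfl | rfl : l = 1 ∨ l = m := by simp [I] at hl hl'; omega
      all_goals simp [hq0]
  rw [hlinear, hquadratic, ← hconst]
  have hsplit : ∑ l ∈ I, 3 * x * q (l - 1)
      = ∑ l ∈ I, x * q (l - 1) + ∑ l ∈ I, 2 * x * q (l - 1) := by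
    rw [← sum_add_distrib]; exact sum_congr rfl fun _ _ => by ring
  rw [hsplit, ← hreflect, ← sum_add_distrib, ← sum_add_distrib, ← sum_add_distrib]
  exact sum_congr rfl fun _ _ => by ring

theorem eval_eq_sum_of_splitting_recursion (P : ℕ → Polynomial ℝ) (hP0 : P 0 = 0)
    (hP1 : P 1 = Polynomial.C 2 * Polynomial.X)
    (hPk : ∀ k, 2 ≤ k → P k =
      Polynomial.C (2 * (k : ℝ)) * Polynomial.X
        + ∑ l ∈ Icc 2 k, Polynomial.C 3 * Polynomial.X * P (l - 1)
        + ∑ l ∈ Icc 2 (k - 1), Polynomial.X * P (l - 1) * P (k - l))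
    (x : ℝ) (m : ℕ) :
    (P m).eval x =
      ∑ l ∈ Ico 1 (m + 1), x * (1 + (P (l - 1)).eval x) * (2 + (P (m - l)).eval x) := by
  rw [sum_Ico_splitting_eq (q := fun n => (P n).eval x) (by simp [hP0])]
  match m with
  | 0 => simp [hP0]
  | 1 => simp [hP1]
  | m + 2 =>
    simp only [hPk (m + 2) le_add_self, Polynomial.eval_add, Polynomial.eval_mul,
      Polynomial.eval_C, Polynomial.eval_X, Polynomial.eval_finsetSum]

section SplittingRecursion

variable {ι 𝕜 : Type*} [Fintype ι] [NormedField 𝕜]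

theorem norm_le_inv_mul_of_eq_div_sub [DecidableEq ι] {α : ι → 𝕜} {ρ : ℝ} (hρ : 0 < ρ)
    (hgap : ∀ i j, i ≠ j → ρ ≤ ‖α i - α j‖) {T M : Matrix ι ι 𝕜}
    (hT : ∀ i j, T i j = if i = j then 0 else M i j / (α j - α i)) :
    ‖T‖ ≤ ρ⁻¹ * ‖M‖ := by
  refine Matrix.linfty_opNorm_le_mul_of_norm_entry_le (by positivity) fun i j => ?_
  rw [hT]
  split_ifs with hij
  · rw [norm_zero]; positivity
  · rw [norm_div, div_eq_inv_mul]
    gcongr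
    exact hgap j i (Ne.symm hij)

theorem norm_H_le_sum_of_splitting {r : ℕ} {B T H A : ℕ → Matrix ι ι 𝕜}
    (hH : ∀ k, 1 ≤ k → H k =
      (∑ l ∈ Ico 1 k, (T l * A (k - l) - B (k - l) * T l)) +
        (if r < k then ((k - r : ℕ) : 𝕜) • T (k - r) else 0))
    {k : ℕ} (hk : 1 ≤ k) (hkr : k ≤ r) :
    ‖H k‖ ≤ ∑ l ∈ Ico 1 k, (‖T l‖ * ‖A (k - l)‖ + ‖B (k - l)‖ * ‖T l‖) := by
  rw [hH k hk, if_neg hkr.not_gt, add_zero]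
  refine (norm_sum_le _ _).trans (sum_le_sum fun l _ => (norm_sub_le _ _).trans ?_)
  exact add_le_add (Matrix.linfty_opNorm_mul _ _) (Matrix.linfty_opNorm_mul _ _)

theorem norm_H_le_of_splitting [DecidableEq ι] {r : ℕ} {α : ι → 𝕜} {ρ : ℝ} (hρ : 0 < ρ)
    (hgap : ∀ i j, i ≠ j → ρ ≤ ‖α i - α j‖) {B T H A : ℕ → Matrix ι ι 𝕜}
    (hH : ∀ k, 1 ≤ k → H k =
      (∑ l ∈ Ico 1 k, (T l * A (k - l) - B (k - l) * T l)) +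
        (if r < k then ((k - r : ℕ) : 𝕜) • T (k - r) else 0))
    (hA : ∀ k, 1 ≤ k → A k = Matrix.diagonal fun j => (B k - H k) j j)
    (hT : ∀ k, 1 ≤ k → ∀ i j, T k i j = if i = j then 0 else (B k - H k) i j / (α j - α i))
    {δ : ℝ} (hδ : 0 ≤ δ) (hB : ∀ k, 1 ≤ k → k ≤ r → ‖B k‖ ≤ δ) {q : ℕ → ℝ}
    (hq : ∀ m, ∑ l ∈ Ico 1 (m + 1), δ / ρ * (1 + q (l - 1)) * (2 + q (m - l)) ≤ q m) :
    ∀ k, 1 ≤ k → k ≤ r → ‖H k‖ ≤ δ * q (k - 1) := by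
  intro k
  induction k using Nat.strong_induction_on with
  | _ k ih =>
    intro hk hkr
    have hBH : ∀ l, 1 ≤ l → l < k → ‖B l - H l‖ ≤ δ * (1 + q (l - 1)) := fun l hl hlk =>
      norm_sub_le_mul_one_add (hB l hl (by omega)) (ih l hlk hl (by omega))
    have hterm : ∀ l ∈ Ico 1 k, ‖T l‖ * ‖A (k - l)‖ + ‖B (k - l)‖ * ‖T l‖
        ≤ δ * (δ / ρ * (1 + q (l - 1)) * (2 + q (k - 1 - l))) := fun l hl => by
      obtain ⟨hl, hlk⟩ := mem_Ico.mp hl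
      have hTl : ‖T l‖ ≤ ρ⁻¹ * (δ * (1 + q (l - 1))) :=
        (norm_le_inv_mul_of_eq_div_sub hρ hgap (hT l hl)).trans (by gcongr; exact hBH l hl hlk)
      have hAkl : ‖A (k - l)‖ ≤ δ * (1 + q (k - 1 - l)) := by
        rw [hA _ (by omega), show k - 1 - l = k - l - 1 by omega]
        exact (Matrix.linfty_opNorm_diagonal_diag_le _).trans (hBH _ (by omega) (by omega))
      have hBkl : ‖B (k - l)‖ ≤ δ := hB _ (by omega) (by omega)
      calc ‖T l‖ * ‖A (k - l)‖ + ‖B (k - l)‖ * ‖T l‖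
          ≤ ρ⁻¹ * (δ * (1 + q (l - 1))) * (δ * (1 + q (k - 1 - l)))
            + δ * (ρ⁻¹ * (δ * (1 + q (l - 1)))) := by
            have hTl₀ := (norm_nonneg _).trans hTl
            gcongr
        _ = δ * (δ / ρ * (1 + q (l - 1)) * (2 + q (k - 1 - l))) := by ring
    calc ‖H k‖ ≤ ∑ l ∈ Ico 1 k, (‖T l‖ * ‖A (k - l)‖ + ‖B (k - l)‖ * ‖T l‖) :=
          norm_H_le_sum_of_splitting hH hk hkr
      _ ≤ ∑ l ∈ Ico 1 k, δ * (δ / ρ * (1 + q (l - 1)) * (2 + q (k - 1 - l))) := sum_le_sum hterm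
      _ = δ * ∑ l ∈ Ico 1 (k - 1 + 1), δ / ρ * (1 + q (l - 1)) * (2 + q (k - 1 - l)) := by
          rw [← mul_sum, Nat.sub_add_cancel hk]
      _ ≤ δ * q (k - 1) := by gcongr; exact hq _

end SplittingRecursion

theorem splitting_recursion_exponent_bound_general
    (p r : ℕ) (hr : 1 ≤ r)
    (α : Fin p → ℂ)
    (ρ : ℝ) (hρ : 0 < ρ)
    (hgap : ∀ i j : Fin p, i ≠ j → ρ ≤ ‖α i - α j‖)
    (B T H A : ℕ → Matrix (Fin p) (Fin p) ℂ)
    (hH : ∀ k, 1 ≤ k → H k =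
      (∑ l ∈ Finset.Ico 1 k, (T l * A (k - l) - B (k - l) * T l)) +
        (if r < k then ((k - r : ℕ) : ℂ) • T (k - r) else 0))
    (hA : ∀ k, 1 ≤ k → A k = Matrix.diagonal fun j => (B k - H k) j j)
    (hT : ∀ k, 1 ≤ k → ∀ i j : Fin p,
      T k i j = if i = j then 0 else (B k - H k) i j / (α j - α i))
    (P : ℕ → Polynomial ℝ)
    (hP0 : P 0 = 0)
    (hP1 : P 1 = Polynomial.C 2 * Polynomial.X)
    (hPk : ∀ k, 2 ≤ k → P k =
      Polynomial.C (2 * (k : ℝ)) * Polynomial.X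
        + ∑ l ∈ Finset.Icc 2 k, Polynomial.C 3 * Polynomial.X * P (l - 1)
        + ∑ l ∈ Finset.Icc 2 (k - 1), Polynomial.X * P (l - 1) * P (k - l))
    (δ : ℝ) (hδ : 0 < δ)
    (hBsmall : ∀ k, 1 ≤ k → k ≤ r → ‖B k‖ ≤ δ) :
    ‖H r‖ ≤ δ * (P (r - 1)).eval (δ / ρ) ∧
      ∀ j : Fin p, ‖(B r - H r) j j‖ ≤ δ * (1 + (P (r - 1)).eval (δ / ρ)) := by
  have hHr : ‖H r‖ ≤ δ * (P (r - 1)).eval (δ / ρ) :=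
    norm_H_le_of_splitting hρ hgap hH hA hT hδ.le hBsmall (q := fun n => (P n).eval (δ / ρ))
      (fun m => (eval_eq_sum_of_splitting_recursion P hP0 hP1 hPk _ m).ge) r hr le_rfl
  exact ⟨hHr, fun j => (Matrix.norm_entry_le_linfty_opNorm _ j j).trans
    (norm_sub_le_mul_one_add (hBsmall r hr le_rfl) hHr)⟩

/-- if `‖B k‖ ≤ δ` for `1 ≤ k ≤ r`, then `‖H r‖ ≤ δ·P_{r-1}(δ/ρ)` and every
formal exponent `λ j = (B r - H r) j j` satisfies `|λ j| ≤ δ(1 + P_{r-1}(δ/ρ))`. -/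
theorem splitting_recursion_exponent_bound
    (p r : ℕ) (hp : 1 ≤ p) (hr : 1 ≤ r)
    (α : Fin p → ℂ) (hα : Function.Injective α)
    (ρ : ℝ) (hρ : 0 < ρ)
    (hgap : ∀ i j : Fin p, i ≠ j → ρ ≤ ‖α i - α j‖)
    (B T H A : ℕ → Matrix (Fin p) (Fin p) ℂ)
    (hB0 : B 0 = Matrix.diagonal α)
    (hT0 : T 0 = 1) (hH0 : H 0 = 0) (hA0 : A 0 = B 0)
    (hH : ∀ k, 1 ≤ k → H k =
      (∑ l ∈ Finset.Ico 1 k, (T l * A (k - l) - B (k - l) * T l)) +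
        (if r < k then ((k - r : ℕ) : ℂ) • T (k - r) else 0))
    (hA : ∀ k, 1 ≤ k → A k = Matrix.diagonal fun j => (B k - H k) j j)
    (hT : ∀ k, 1 ≤ k → ∀ i j : Fin p,
      T k i j = if i = j then 0 else (B k - H k) i j / (α j - α i))
    (P : ℕ → Polynomial ℝ)
    (hP0 : P 0 = 0)
    (hP1 : P 1 = Polynomial.C 2 * Polynomial.X)
    (hPk : ∀ k, 2 ≤ k → P k =
      Polynomial.C (2 * (k : ℝ)) * Polynomial.X
        + ∑ l ∈ Finset.Icc 2 k, Polynomial.C 3 * Polynomial.X * P (l - 1)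
        + ∑ l ∈ Finset.Icc 2 (k - 1), Polynomial.X * P (l - 1) * P (k - l))
    (δ : ℝ) (hδ : 0 < δ)
    (hBsmall : ∀ k, 1 ≤ k → k ≤ r → ‖B k‖ ≤ δ) :
    ‖H r‖ ≤ δ * (P (r - 1)).eval (δ / ρ) ∧
      ∀ j : Fin p, ‖(B r - H r) j j‖ ≤ δ * (1 + (P (r - 1)).eval (δ / ρ)) :=
  splitting_recursion_exponent_bound_general p r hr α ρ hρ hgap B T H A hH hA hT P hP0 hP1 hPk δ hδ
    hBsmall
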